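/- Let N ≥ 1 be an integer, let F : ℂ^N → ℂ^N be quadratic, i.e. F(z) = B(z,z) + A(z) for a symmetric bilinear map B : ℂ^N × ℂ^N → ℂ^N and a linear map A : ℂ^N → ℂ^N, and let R > 0. Then there exists C₁ > 0, depending only on N, R and the operator norms of A and B, such that for every λ ≥ 1, every α ∈ [0,1], and all twice continuously differentiable y, z : [0,1] → ℂ^N with ‖y‖_{H²} ≤ R and ‖z‖_{H²} ≤ R, one has |J_{λ,α}(y + z) − J_{λ,α}(y)| ≤ C₁ ‖z‖_{H²} e^{2λ}. (Estimate (5.181).) -/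

import Mathlib

/-!
Write `u = y'' + F(y')` for the residual of `y` and `v` for the increment of the residual from `y`
to `y + z`. The one-dimensional Sobolev embedding bounds `‖y'‖∞` and `‖z'‖∞` by `2R`, so on the
relevant ball the quadratic `F` is Lipschitz with a constant `c` depending only on `R`, `‖A‖`,
`‖B‖`; hence `‖u‖_{L²} ≤ (1 + c) R` and `‖v‖_{L²} ≤ (1 + c) ‖z‖_{H²}`. Since the weight
`e^{-2λx}` lies in `[0, 1]`, the pointwise bound `|‖u + v‖² - ‖u‖²| ≤ (2‖u‖ + ‖v‖)‖v‖` and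
Cauchy–Schwarz make the weighted integrals differ by at most `3 (1 + c)² R ‖z‖_{H²}`; the same
argument applied to `y, y', y''` handles the `H²` term, which carries no factor `e^{2λ}`.
-/

open MeasureTheory

/-- The `H²(0,1)` norm of a function `g : [0,1] → ℂ^N`:
`‖g‖_{H²}² = ∫₀¹ (|g|² + |g'|² + |g''|²) dx`. -/
noncomputable def H2norm {N : ℕ} (g : ℝ → EuclideanSpace ℂ (Fin N)) : ℝ :=
  Real.sqrt (∫ x in (0:ℝ)..1,
    (‖g x‖ ^ 2 + ‖deriv g x‖ ^ 2 + ‖deriv (deriv g) x‖ ^ 2))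

/-- The real `H²(0,1)` inner product
`⟨g,h⟩_{H²} = ∫₀¹ Re(⟨g,h⟩ + ⟨g',h'⟩ + ⟨g'',h''⟩) dx`. -/
noncomputable def H2inner {N : ℕ} (g h : ℝ → EuclideanSpace ℂ (Fin N)) : ℝ :=
  ∫ x in (0:ℝ)..1,
    (((inner ℂ (g x) (h x) : ℂ)).re + ((inner ℂ (deriv g x) (deriv h x) : ℂ)).re
      + ((inner ℂ (deriv (deriv g) x) (deriv (deriv h) x) : ℂ)).re)

/-- The weighted Tikhonov-like functional
`J_{λ,α}(y) = e^{2λ} ∫₀¹ |y'' + F(y')|² e^{-2λx} dx + α‖y‖_{H²}²`. -/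
noncomputable def Jfun {N : ℕ}
    (F : EuclideanSpace ℂ (Fin N) → EuclideanSpace ℂ (Fin N))
    (lam α : ℝ) (y : ℝ → EuclideanSpace ℂ (Fin N)) : ℝ :=
  Real.exp (2 * lam) *
      (∫ x in (0:ℝ)..1, ‖deriv (deriv y) x + F (deriv y x)‖ ^ 2 * Real.exp (-2 * lam * x))
    + α * (H2norm y) ^ 2

/-- The linearization (Fréchet derivative) of `J_{λ,α}` at `y` applied to `h`, where
`F(z) = B(z,z) + A(z)`:
`L_{λ,α,y}(h) = e^{2λ} ∫₀¹ 2Re⟨h'' + 2B(y',h') + A(h'), y'' + F(y')⟩ e^{-2λx} dx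
  + 2α⟨y,h⟩_{H²}`. -/
noncomputable def Lfun {N : ℕ}
    (B : EuclideanSpace ℂ (Fin N) →L[ℂ] EuclideanSpace ℂ (Fin N) →L[ℂ] EuclideanSpace ℂ (Fin N))
    (A : EuclideanSpace ℂ (Fin N) →L[ℂ] EuclideanSpace ℂ (Fin N))
    (lam α : ℝ) (y h : ℝ → EuclideanSpace ℂ (Fin N)) : ℝ :=
  Real.exp (2 * lam) *
      (∫ x in (0:ℝ)..1,
        2 * ((inner ℂ (deriv (deriv h) x + (2:ℂ) • B (deriv y x) (deriv h x) + A (deriv h x))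
              (deriv (deriv y) x + (B (deriv y x) (deriv y x) + A (deriv y x))) : ℂ)).re
          * Real.exp (-2 * lam * x))
    + 2 * α * H2inner y h

open Set

section Analysis

variable {E : Type*} [NormedAddCommGroup E]

theorem intervalIntegral_mul_le_sqrt_mul_sqrt {f g : ℝ → ℝ} (hf : Continuous f)
    (hg : Continuous g) :
    ∫ x in (0:ℝ)..1, f x * g x
      ≤ √(∫ x in (0:ℝ)..1, f x ^ 2) * √(∫ x in (0:ℝ)..1, g x ^ 2) := by
  set a := ∫ x in (0:ℝ)..1, f x ^ 2
  set b := ∫ x in (0:ℝ)..1, f x * g x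
  set c := ∫ x in (0:ℝ)..1, g x ^ 2
  -- `t ↦ ∫ (t f - g)²` is a nonnegative quadratic, so its discriminant is nonpositive
  have hquad : ∀ t : ℝ, 0 ≤ a * (t * t) + (-2 * b) * t + c := by
    intro t
    have hexpand : ∫ x in (0:ℝ)..1, (t * f x - g x) ^ 2 = a * (t * t) + (-2 * b) * t + c := by
      have hint : IntervalIntegrable (fun x => t ^ 2 * f x ^ 2 - 2 * t * (f x * g x)) volume 0 1 :=
        (by fun_prop : Continuous _).intervalIntegrable _ _
      simp_rw [show ∀ x, (t * f x - g x) ^ 2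
        = t ^ 2 * f x ^ 2 - 2 * t * (f x * g x) + g x ^ 2 from fun x => by ring]
      rw [intervalIntegral.integral_add hint ((by fun_prop : Continuous _).intervalIntegrable _ _),
        intervalIntegral.integral_sub ((by fun_prop : Continuous _).intervalIntegrable _ _)
          ((by fun_prop : Continuous _).intervalIntegrable _ _),
        intervalIntegral.integral_const_mul, intervalIntegral.integral_const_mul]
      ring
    rw [← hexpand]
    exact intervalIntegral.integral_nonneg zero_le_one fun x _ => sq_nonneg _
  have hdisc := discrim_le_zero hquad
  rw [discrim] at hdisc
  have ha : 0 ≤ a := intervalIntegral.integral_nonneg zero_le_one fun x _ => sq_nonneg _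
  rw [← Real.sqrt_mul ha]
  exact Real.le_sqrt_of_sq_le (by nlinarith)

noncomputable def L2norm (f : ℝ → E) : ℝ :=
  √(∫ x in (0:ℝ)..1, ‖f x‖ ^ 2)

theorem L2norm_nonneg (f : ℝ → E) : 0 ≤ L2norm f :=
  Real.sqrt_nonneg _

theorem L2norm_sq (f : ℝ → E) : L2norm f ^ 2 = ∫ x in (0:ℝ)..1, ‖f x‖ ^ 2 :=
  Real.sq_sqrt (intervalIntegral.integral_nonneg zero_le_one fun _ _ => by positivity)

theorem integral_norm_mul_norm_le_L2norm_mul {f g : ℝ → E} (hf : Continuous f)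
    (hg : Continuous g) :
    ∫ x in (0:ℝ)..1, ‖f x‖ * ‖g x‖ ≤ L2norm f * L2norm g :=
  intervalIntegral_mul_le_sqrt_mul_sqrt hf.norm hg.norm

theorem abs_norm_add_sq_sub_norm_sq_le (a b : E) :
    |‖a + b‖ ^ 2 - ‖a‖ ^ 2| ≤ (2 * ‖a‖ + ‖b‖) * ‖b‖ := by
  have h₁ : ‖a + b‖ ≤ ‖a‖ + ‖b‖ := norm_add_le a b
  have h₂ : ‖a‖ ≤ ‖a + b‖ + ‖b‖ := by simpa using norm_add_le (a + b) (-b)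
  rw [abs_le]
  constructor <;> nlinarith [norm_nonneg a, norm_nonneg b, norm_nonneg (a + b)]

theorem abs_integral_norm_add_sq_mul_sub_le {u v : ℝ → E} {w : ℝ → ℝ} (hu : Continuous u)
    (hv : Continuous v) (hw : Continuous w) (hw01 : ∀ x ∈ Icc (0:ℝ) 1, w x ∈ Icc (0:ℝ) 1) :
    |(∫ x in (0:ℝ)..1, ‖u x + v x‖ ^ 2 * w x) - ∫ x in (0:ℝ)..1, ‖u x‖ ^ 2 * w x|
      ≤ (2 * L2norm u + L2norm v) * L2norm v := by
  rw [← intervalIntegral.integral_sub ((by fun_prop : Continuous _).intervalIntegrable _ _)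
    ((by fun_prop : Continuous _).intervalIntegrable _ _)]
  calc |∫ x in (0:ℝ)..1, ‖u x + v x‖ ^ 2 * w x - ‖u x‖ ^ 2 * w x|
      ≤ ∫ x in (0:ℝ)..1, |‖u x + v x‖ ^ 2 * w x - ‖u x‖ ^ 2 * w x| :=
        intervalIntegral.abs_integral_le_integral_abs zero_le_one
    _ ≤ ∫ x in (0:ℝ)..1, (2 * (‖u x‖ * ‖v x‖) + ‖v x‖ ^ 2) := by
        refine intervalIntegral.integral_mono_on zero_le_one
          ((by fun_prop : Continuous _).intervalIntegrable _ _)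
          ((by fun_prop : Continuous _).intervalIntegrable _ _) fun x hx => ?_
        obtain ⟨hw0, hw1⟩ := hw01 x hx
        rw [← sub_mul, abs_mul, abs_of_nonneg hw0]
        nlinarith [abs_norm_add_sq_sub_norm_sq_le (u x) (v x),
          abs_nonneg (‖u x + v x‖ ^ 2 - ‖u x‖ ^ 2)]
    _ = 2 * (∫ x in (0:ℝ)..1, ‖u x‖ * ‖v x‖) + L2norm v ^ 2 := by
        rw [intervalIntegral.integral_add ((by fun_prop : Continuous _).intervalIntegrable _ _)
          ((by fun_prop : Continuous _).intervalIntegrable _ _),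
          intervalIntegral.integral_const_mul, L2norm_sq]
    _ ≤ (2 * L2norm u + L2norm v) * L2norm v := by
        nlinarith [integral_norm_mul_norm_le_L2norm_mul hu hv]

theorem abs_L2norm_add_sq_sub_sq_le {u v : ℝ → E} (hu : Continuous u) (hv : Continuous v) :
    |L2norm (u + v) ^ 2 - L2norm u ^ 2| ≤ (2 * L2norm u + L2norm v) * L2norm v := by
  simpa [L2norm_sq] using
    abs_integral_norm_add_sq_mul_sub_le hu hv continuous_const (w := fun _ => 1)
      fun _ _ => ⟨zero_le_one, le_rfl⟩

variable [NormedSpace ℝ E]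

theorem ContDiff.deriv_of_two {f : ℝ → E} (hf : ContDiff ℝ 2 f) : ContDiff ℝ 1 (deriv f) :=
  hf.deriv' (n := 1)

theorem deriv_add_of_differentiable {y z : ℝ → E} (hy : Differentiable ℝ y)
    (hz : Differentiable ℝ z) :
    deriv (y + z) = deriv y + deriv z :=
  funext fun x => deriv_add (hy x) (hz x)

theorem deriv_deriv_add {y z : ℝ → E} (hy : ContDiff ℝ 2 y) (hz : ContDiff ℝ 2 z) :
    deriv (deriv (y + z)) = deriv (deriv y) + deriv (deriv z) := by
  rw [deriv_add_of_differentiable (hy.differentiable two_ne_zero) (hz.differentiable two_ne_zero)]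
  exact deriv_add_of_differentiable (hy.deriv_of_two.differentiable one_ne_zero)
    (hz.deriv_of_two.differentiable one_ne_zero)

theorem norm_le_L2norm_add_L2norm_deriv [CompleteSpace E] {w : ℝ → E}
    (hw : ContDiff ℝ 1 w) {x : ℝ} (hx : x ∈ Icc (0:ℝ) 1) :
    ‖w x‖ ≤ L2norm w + L2norm (deriv w) := by
  have hw' : Continuous (deriv w) := hw.continuous_deriv le_rfl
  obtain ⟨x₀, hx₀, hmin⟩ := isCompact_Icc.exists_isMinOn (nonempty_Icc.mpr zero_le_one)
    hw.continuous.norm.continuousOn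
  have hmin_le : ‖w x₀‖ ≤ L2norm w := by
    refine le_of_sq_le_sq ?_ (L2norm_nonneg w)
    rw [L2norm_sq]
    calc ‖w x₀‖ ^ 2 = ∫ _ in (0:ℝ)..1, ‖w x₀‖ ^ 2 := by simp
      _ ≤ ∫ t in (0:ℝ)..1, ‖w t‖ ^ 2 :=
        intervalIntegral.integral_mono_on zero_le_one intervalIntegrable_const
          ((by fun_prop : Continuous _).intervalIntegrable _ _)
          fun t ht => pow_le_pow_left₀ (norm_nonneg _) (hmin ht) 2
  have hftc : ‖w x - w x₀‖ ≤ ∫ t in (0:ℝ)..1, ‖deriv w t‖ := by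
    rw [← intervalIntegral.integral_deriv_eq_sub (fun t _ => hw.differentiable one_ne_zero t)
      (hw'.intervalIntegrable _ _), intervalIntegral.integral_of_le zero_le_one]
    refine intervalIntegral.norm_integral_le_integral_norm_uIoc.trans
      (setIntegral_mono_set ?_ ?_ ?_)
    · exact (hw'.norm.integrableOn_Icc).mono_set Ioc_subset_Icc_self
    · exact Filter.Eventually.of_forall fun _ => norm_nonneg _
    · refine ((uIoc_subset_uIoc_of_uIcc_subset_uIcc ?_).trans_eq
        (uIoc_of_le zero_le_one)).eventuallyLE
      rw [uIcc_of_le zero_le_one]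
      exact uIcc_subset_Icc hx₀ hx
  have hmean : ∫ t in (0:ℝ)..1, ‖deriv w t‖ ≤ L2norm (deriv w) := by
    simpa [L2norm] using
      intervalIntegral_mul_le_sqrt_mul_sqrt hw'.norm (continuous_const (y := (1:ℝ)))
  calc ‖w x‖ = ‖w x₀ + (w x - w x₀)‖ := by rw [add_sub_cancel]
    _ ≤ ‖w x₀‖ + ‖w x - w x₀‖ := norm_add_le _ _
    _ ≤ L2norm w + L2norm (deriv w) := add_le_add hmin_le (hftc.trans hmean)

noncomputable def odeResidual (F : E → E) (y : ℝ → E) (x : ℝ) : E :=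
  deriv (deriv y) x + F (deriv y x)

theorem continuous_odeResidual {F : E → E} (hF : Continuous F) {y : ℝ → E}
    (hy : ContDiff ℝ 2 y) : Continuous (odeResidual F y) :=
  (hy.deriv_of_two.continuous_deriv le_rfl).add (hF.comp hy.deriv_of_two.continuous)

theorem odeResidual_zero {F : E → E} (hF : F 0 = 0) : odeResidual F 0 = 0 := by
  funext x
  simp [odeResidual, hF]

theorem odeResidual_add_sub (F : E → E) {y z : ℝ → E} (hy : ContDiff ℝ 2 y)
    (hz : ContDiff ℝ 2 z) (x : ℝ) :
    odeResidual F (y + z) x - odeResidual F y x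
      = deriv (deriv z) x + (F (deriv y x + deriv z x) - F (deriv y x)) := by
  rw [odeResidual, odeResidual, deriv_deriv_add hy hz, deriv_add_of_differentiable
    (hy.differentiable two_ne_zero) (hz.differentiable two_ne_zero)]
  simp only [Pi.add_apply]
  abel

end Analysis

theorem norm_quadratic_add_sub_le {𝕜 E F : Type*} [NontriviallyNormedField 𝕜]
    [NormedAddCommGroup E] [NormedSpace 𝕜 E] [NormedAddCommGroup F] [NormedSpace 𝕜 F]
    (B : E →L[𝕜] E →L[𝕜] F) (A : E →L[𝕜] F) (a b : E) :
    ‖(B (a + b) (a + b) + A (a + b)) - (B a a + A a)‖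
      ≤ (‖B‖ * (2 * ‖a‖ + ‖b‖) + ‖A‖) * ‖b‖ := by
  have hexpand : (B (a + b) (a + b) + A (a + b)) - (B a a + A a)
      = B a b + B b a + B b b + A b := by
    simp only [map_add, add_apply]
    abel
  rw [hexpand]
  calc _ ≤ ‖B a b‖ + ‖B b a‖ + ‖B b b‖ + ‖A b‖ := norm_add₄_le
    _ ≤ ‖B‖ * ‖a‖ * ‖b‖ + ‖B‖ * ‖b‖ * ‖a‖ + ‖B‖ * ‖b‖ * ‖b‖ + ‖A‖ * ‖b‖ := by
      gcongr <;> first | exact B.le_opNorm₂ _ _ | exact A.le_opNorm _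
    _ = (‖B‖ * (2 * ‖a‖ + ‖b‖) + ‖A‖) * ‖b‖ := by ring

section H2

variable {N : ℕ} {g : ℝ → EuclideanSpace ℂ (Fin N)}

theorem H2norm_sq_eq (hg : ContDiff ℝ 2 g) :
    H2norm g ^ 2 = L2norm g ^ 2 + L2norm (deriv g) ^ 2 + L2norm (deriv (deriv g)) ^ 2 := by
  have hg' := hg.deriv_of_two
  have hint : ∀ f : ℝ → EuclideanSpace ℂ (Fin N), Continuous f →
      IntervalIntegrable (fun x => ‖f x‖ ^ 2) volume 0 1 :=
    fun f hf => (by fun_prop : Continuous _).intervalIntegrable _ _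
  rw [H2norm, Real.sq_sqrt (intervalIntegral.integral_nonneg zero_le_one fun _ _ => by positivity),
    intervalIntegral.integral_add ((hint _ hg.continuous).add (hint _ hg'.continuous))
      (hint _ (hg'.continuous_deriv le_rfl)),
    intervalIntegral.integral_add (hint _ hg.continuous) (hint _ hg'.continuous),
    L2norm_sq, L2norm_sq, L2norm_sq]

theorem H2norm_nonneg (g : ℝ → EuclideanSpace ℂ (Fin N)) : 0 ≤ H2norm g :=
  Real.sqrt_nonneg _

theorem L2norm_le_H2norm (hg : ContDiff ℝ 2 g) : L2norm g ≤ H2norm g :=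
  (sq_le_sq₀ (L2norm_nonneg _) (H2norm_nonneg g)).mp <| by
    linarith [H2norm_sq_eq hg, sq_nonneg (L2norm (deriv g)), sq_nonneg (L2norm (deriv (deriv g)))]

theorem L2norm_deriv_le_H2norm (hg : ContDiff ℝ 2 g) : L2norm (deriv g) ≤ H2norm g :=
  (sq_le_sq₀ (L2norm_nonneg _) (H2norm_nonneg g)).mp <| by
    linarith [H2norm_sq_eq hg, sq_nonneg (L2norm g), sq_nonneg (L2norm (deriv (deriv g)))]

theorem L2norm_deriv_deriv_le_H2norm (hg : ContDiff ℝ 2 g) :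
    L2norm (deriv (deriv g)) ≤ H2norm g :=
  (sq_le_sq₀ (L2norm_nonneg _) (H2norm_nonneg g)).mp <| by
    linarith [H2norm_sq_eq hg, sq_nonneg (L2norm g), sq_nonneg (L2norm (deriv g))]

theorem norm_deriv_le_two_mul_H2norm (hg : ContDiff ℝ 2 g) {x : ℝ} (hx : x ∈ Icc (0:ℝ) 1) :
    ‖deriv g x‖ ≤ 2 * H2norm g := by
  linarith [norm_le_L2norm_add_L2norm_deriv hg.deriv_of_two hx, L2norm_deriv_le_H2norm hg,
    L2norm_deriv_deriv_le_H2norm hg]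

theorem L2norm_le_mul_H2norm_of_norm_le {v : ℝ → EuclideanSpace ℂ (Fin N)} (hg : ContDiff ℝ 2 g)
    (hv : Continuous v) {c : ℝ} (hc : 0 ≤ c)
    (hvg : ∀ x ∈ Icc (0:ℝ) 1, ‖v x‖ ≤ ‖deriv (deriv g) x‖ + c * ‖deriv g x‖) :
    L2norm v ≤ (1 + c) * H2norm g := by
  have hg' := hg.deriv_of_two
  have hg'' := hg'.continuous_deriv le_rfl
  refine (sq_le_sq₀ (L2norm_nonneg _) (by positivity [H2norm_nonneg g])).mp ?_
  rw [L2norm_sq, mul_pow, H2norm, Real.sq_sqrt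
    (intervalIntegral.integral_nonneg zero_le_one fun _ _ => by positivity),
    ← intervalIntegral.integral_const_mul]
  refine intervalIntegral.integral_mono_on zero_le_one
    ((by fun_prop : Continuous _).intervalIntegrable _ _)
    ((by fun_prop : Continuous _).intervalIntegrable _ _) fun x hx => ?_
  set a := ‖deriv (deriv g) x‖
  set b := ‖deriv g x‖
  calc ‖v x‖ ^ 2 ≤ (a + c * b) ^ 2 := pow_le_pow_left₀ (norm_nonneg _) (hvg x hx) 2
    _ ≤ (1 + c) ^ 2 * (a ^ 2 + b ^ 2) := by
      nlinarith [mul_nonneg hc (sq_nonneg (a - b)), mul_nonneg hc (sq_nonneg a),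
        mul_nonneg (mul_nonneg hc hc) (sq_nonneg a), sq_nonneg b, mul_nonneg hc (sq_nonneg b)]
    _ ≤ (1 + c) ^ 2 * (‖g x‖ ^ 2 + b ^ 2 + a ^ 2) := by nlinarith [sq_nonneg ‖g x‖]

theorem abs_H2norm_add_sq_sub_sq_le {y z : ℝ → EuclideanSpace ℂ (Fin N)} (hy : ContDiff ℝ 2 y)
    (hz : ContDiff ℝ 2 z) :
    |H2norm (y + z) ^ 2 - H2norm y ^ 2| ≤ 3 * (2 * H2norm y + H2norm z) * H2norm z := by
  have hy' := hy.deriv_of_two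
  have hz' := hz.deriv_of_two
  have hcomponent : ∀ u v : ℝ → EuclideanSpace ℂ (Fin N), Continuous u → Continuous v →
      L2norm u ≤ H2norm y → L2norm v ≤ H2norm z →
      |L2norm (u + v) ^ 2 - L2norm u ^ 2| ≤ (2 * H2norm y + H2norm z) * H2norm z :=
    fun u v hu hv huy hvz => (abs_L2norm_add_sq_sub_sq_le hu hv).trans <|
      mul_le_mul (by linarith) hvz (L2norm_nonneg v)
        (by linarith [H2norm_nonneg y, H2norm_nonneg z])
  rw [H2norm_sq_eq (g := y + z) (hy.add hz), H2norm_sq_eq hy, deriv_deriv_add hy hz,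
    deriv_add_of_differentiable (hy.differentiable two_ne_zero) (hz.differentiable two_ne_zero)]
  calc _ = |(L2norm (y + z) ^ 2 - L2norm y ^ 2)
        + (L2norm (deriv y + deriv z) ^ 2 - L2norm (deriv y) ^ 2)
        + (L2norm (deriv (deriv y) + deriv (deriv z)) ^ 2 - L2norm (deriv (deriv y)) ^ 2)| := by
        ring_nf
    _ ≤ _ := (abs_add_three _ _ _).trans <| by
        linarith [hcomponent _ _ hy.continuous hz.continuous (L2norm_le_H2norm hy)
            (L2norm_le_H2norm hz),
          hcomponent _ _ hy'.continuous hz'.continuous (L2norm_deriv_le_H2norm hy)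
            (L2norm_deriv_le_H2norm hz),
          hcomponent _ _ (hy'.continuous_deriv le_rfl) (hz'.continuous_deriv le_rfl)
            (L2norm_deriv_deriv_le_H2norm hy) (L2norm_deriv_deriv_le_H2norm hz)]

theorem Jfun_eq (F : EuclideanSpace ℂ (Fin N) → EuclideanSpace ℂ (Fin N)) (lam α : ℝ)
    (y : ℝ → EuclideanSpace ℂ (Fin N)) :
    Jfun F lam α y = Real.exp (2 * lam) *
      (∫ x in (0:ℝ)..1, ‖odeResidual F y x‖ ^ 2 * Real.exp (-2 * lam * x)) + α * H2norm y ^ 2 :=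
  rfl

theorem abs_Jfun_add_sub_le {F : EuclideanSpace ℂ (Fin N) → EuclideanSpace ℂ (Fin N)}
    (hF : Continuous F) {y z : ℝ → EuclideanSpace ℂ (Fin N)} (hy : ContDiff ℝ 2 y)
    (hz : ContDiff ℝ 2 z) {lam α : ℝ} (hlam : 0 ≤ lam) (hα : α ∈ Icc (0:ℝ) 1) :
    |Jfun F lam α (y + z) - Jfun F lam α y|
      ≤ Real.exp (2 * lam) * ((2 * L2norm (odeResidual F y)
            + L2norm (odeResidual F (y + z) - odeResidual F y))
          * L2norm (odeResidual F (y + z) - odeResidual F y))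
        + 3 * (2 * H2norm y + H2norm z) * H2norm z := by
  have hweighted := abs_integral_norm_add_sq_mul_sub_le (continuous_odeResidual hF hy)
    ((continuous_odeResidual hF (hy.add hz)).sub (continuous_odeResidual hF hy))
    (w := fun x => Real.exp (-2 * lam * x)) (by fun_prop)
    fun x hx => ⟨(Real.exp_pos _).le, Real.exp_le_one_iff.mpr (by nlinarith [hx.1])⟩
  simp only [Pi.sub_apply, add_sub_cancel] at hweighted
  rw [Jfun_eq, Jfun_eq, show ∀ e I₁ I₂ H₁ H₂ : ℝ, e * I₁ + α * H₁ - (e * I₂ + α * H₂)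
    = e * (I₁ - I₂) + α * (H₁ - H₂) from fun _ _ _ _ _ => by ring]
  refine (abs_add_le _ _).trans ?_
  rw [abs_mul, abs_mul, abs_of_pos (Real.exp_pos _), abs_of_nonneg hα.1]
  exact add_le_add (mul_le_mul_of_nonneg_left hweighted (Real.exp_pos _).le)
    ((mul_le_of_le_one_left (abs_nonneg _) hα.2).trans (abs_H2norm_add_sq_sub_sq_le hy hz))

theorem L2norm_odeResidual_quadratic_add_sub_le
    (B : EuclideanSpace ℂ (Fin N) →L[ℂ] EuclideanSpace ℂ (Fin N) →L[ℂ] EuclideanSpace ℂ (Fin N))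
    (A : EuclideanSpace ℂ (Fin N) →L[ℂ] EuclideanSpace ℂ (Fin N))
    {y z : ℝ → EuclideanSpace ℂ (Fin N)} (hy : ContDiff ℝ 2 y) (hz : ContDiff ℝ 2 z) {ρ : ℝ}
    (hyρ : ∀ x ∈ Icc (0:ℝ) 1, ‖deriv y x‖ ≤ ρ) (hzρ : ∀ x ∈ Icc (0:ℝ) 1, ‖deriv z x‖ ≤ ρ) :
    L2norm (odeResidual (fun w => B w w + A w) (y + z) - odeResidual (fun w => B w w + A w) y)
      ≤ (1 + (‖B‖ * (3 * ρ) + ‖A‖)) * H2norm z := by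
  have hρ : 0 ≤ ρ := (norm_nonneg _).trans (hyρ 0 ⟨le_rfl, zero_le_one⟩)
  have hF : Continuous fun w => B w w + A w := by fun_prop
  have hcont : Continuous (odeResidual _ (y + z) - odeResidual _ y) :=
    (continuous_odeResidual hF (hy.add hz)).sub (continuous_odeResidual hF hy)
  refine L2norm_le_mul_H2norm_of_norm_le hz hcont (by positivity) fun x hx => ?_
  rw [Pi.sub_apply, odeResidual_add_sub _ hy hz]
  refine (norm_add_le _ _).trans (add_le_add_right ?_ _)
  refine (norm_quadratic_add_sub_le B A _ _).trans ?_
  gcongr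
  linarith [hyρ x hx, hzρ x hx]

end H2

theorem functional_increment_estimate_general {N : ℕ}
    (B : EuclideanSpace ℂ (Fin N) →L[ℂ] EuclideanSpace ℂ (Fin N) →L[ℂ] EuclideanSpace ℂ (Fin N))
    (A : EuclideanSpace ℂ (Fin N) →L[ℂ] EuclideanSpace ℂ (Fin N))
    (R : ℝ) (hR : 0 < R) :
    ∃ C₁ : ℝ, 0 < C₁ ∧
      ∀ lam : ℝ, 1 ≤ lam → ∀ α ∈ Set.Icc (0:ℝ) 1,
        ∀ y z : ℝ → EuclideanSpace ℂ (Fin N),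
          ContDiff ℝ 2 y → ContDiff ℝ 2 z →
          H2norm y ≤ R → H2norm z ≤ R →
          |Jfun (fun w => B w w + A w) lam α (y + z)
              - Jfun (fun w => B w w + A w) lam α y|
            ≤ C₁ * H2norm z * Real.exp (2 * lam) := by
  set c := ‖B‖ * (3 * (2 * R)) + ‖A‖
  refine ⟨3 * (1 + c) ^ 2 * R + 9 * R, by positivity, ?_⟩
  intro lam hlam α hα y z hy hz hyR hzR
  have hslope : ∀ {g : ℝ → EuclideanSpace ℂ (Fin N)}, ContDiff ℝ 2 g → H2norm g ≤ R →
      ∀ x ∈ Icc (0:ℝ) 1, ‖deriv g x‖ ≤ 2 * R :=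
    fun hg hgR x hx => (norm_deriv_le_two_mul_H2norm hg hx).trans (by linarith)
  -- the residual of `y` is its increment over the zero function
  have hu : L2norm (odeResidual (fun w => B w w + A w) y) ≤ (1 + c) * R := by
    have h := L2norm_odeResidual_quadratic_add_sub_le B A (y := 0) contDiff_zero_fun hy
      (fun x _ => by simp [hR.le]) (hslope hy hyR)
    rw [zero_add, odeResidual_zero (by simp), sub_zero] at h
    exact h.trans (by gcongr)
  have hv := L2norm_odeResidual_quadratic_add_sub_le B A hy hz (hslope hy hyR) (hslope hz hzR)
  have hv' : L2norm (odeResidual (fun w => B w w + A w) (y + z)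
      - odeResidual (fun w => B w w + A w) y) ≤ (1 + c) * R :=
    hv.trans (by gcongr)
  have hZ := H2norm_nonneg z
  have hexp : 1 ≤ Real.exp (2 * lam) := Real.one_le_exp (by linarith)
  calc _ ≤ _ := abs_Jfun_add_sub_le (by fun_prop) hy hz (by linarith) hα
    _ ≤ Real.exp (2 * lam) * ((2 * ((1 + c) * R) + (1 + c) * R) * ((1 + c) * H2norm z))
        + 3 * (2 * R + R) * H2norm z := by
      gcongr
      exact L2norm_nonneg _
    _ ≤ _ := by nlinarith [mul_le_mul_of_nonneg_left hexp (by positivity : 0 ≤ 9 * R * H2norm z)]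

/-- **Estimate (5.181).** There exists `C₁ > 0` depending only on `N`, `R` and the
operator norms of `A`, `B` such that for all `λ ≥ 1`, `α ∈ [0,1]` and `C²` functions
`y, z` of `H²` norm `≤ R`: `|J_{λ,α}(y + z) − J_{λ,α}(y)| ≤ C₁ ‖z‖_{H²} e^{2λ}`. -/
theorem functional_increment_estimate {N : ℕ} (hN : 1 ≤ N)
    (B : EuclideanSpace ℂ (Fin N) →L[ℂ] EuclideanSpace ℂ (Fin N) →L[ℂ] EuclideanSpace ℂ (Fin N))
    (hBsymm : ∀ z w, B z w = B w z)
    (A : EuclideanSpace ℂ (Fin N) →L[ℂ] EuclideanSpace ℂ (Fin N))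
    (R : ℝ) (hR : 0 < R) :
    ∃ C₁ : ℝ, 0 < C₁ ∧
      ∀ lam : ℝ, 1 ≤ lam → ∀ α ∈ Set.Icc (0:ℝ) 1,
        ∀ y z : ℝ → EuclideanSpace ℂ (Fin N),
          ContDiff ℝ 2 y → ContDiff ℝ 2 z →
          H2norm y ≤ R → H2norm z ≤ R →
          |Jfun (fun w => B w w + A w) lam α (y + z)
              - Jfun (fun w => B w w + A w) lam α y|
            ≤ C₁ * H2norm z * Real.exp (2 * lam) :=
  functional_increment_estimate_general B A R hR
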